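/- Let N ≥ 1, let p ≥ 0 and λ > 0 be real numbers, and let f : ℝ^N → ℝ be a continuous, ℤ^N-periodic, everywhere strictly positive function. If u₁ and u₂ are two C², ℤ^N-periodic admissible functions both satisfying det A[u](x) = e^{−λu(x)} · f(x) · (1 + ‖∇u(x)‖²)^p for all x, then u₁ = u₂. -/

import Mathlib

open Matrix Real

/-- The `i`-th partial derivative (gradient component) of `u` at `x`. -/
noncomputable def grad {N : ℕ} (u : (Fin N → ℝ) → ℝ) (x : Fin N → ℝ) (i : Fin N) : ℝ :=
  fderiv ℝ u x (Pi.single i 1)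

/-- The `(i,j)` entry of the Hessian matrix of `u` at `x`. -/
noncomputable def hess {N : ℕ} (u : (Fin N → ℝ) → ℝ) (x : Fin N → ℝ) (i j : Fin N) : ℝ :=
  fderiv ℝ (fun y => fderiv ℝ u y (Pi.single j 1)) x (Pi.single i 1)

/-- The squared norm of the gradient of `u` at `x`. -/
noncomputable def gradSq {N : ℕ} (u : (Fin N → ℝ) → ℝ) (x : Fin N → ℝ) : ℝ :=
  ∑ i, (grad u x i) ^ 2

/-- The Laplacian of `u` at `x` (trace of the Hessian). -/
noncomputable def lap {N : ℕ} (u : (Fin N → ℝ) → ℝ) (x : Fin N → ℝ) : ℝ :=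
  ∑ i, hess u x i i

/-- The matrix `A[u](x) = I + ∇u(x) (∇u(x))ᵀ − Hess u(x)`. -/
noncomputable def amat {N : ℕ} (u : (Fin N → ℝ) → ℝ) (x : Fin N → ℝ) :
    Matrix (Fin N) (Fin N) ℝ :=
  1 + Matrix.of (fun i j => grad u x i * grad u x j) - Matrix.of (fun i j => hess u x i j)

/-- `u` is `ℤ^N`-periodic. -/
def ZPeriodic {N : ℕ} (u : (Fin N → ℝ) → ℝ) : Prop :=
  ∀ (x : Fin N → ℝ) (k : Fin N → ℤ), u (x + fun i => (k i : ℝ)) = u x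

/-- `u` is admissible: `A[u](x)` is positive definite for every `x`. -/
def Admissible {N : ℕ} (u : (Fin N → ℝ) → ℝ) : Prop :=
  ∀ x, (amat u x).PosDef

/-!
Let `x₀` be a maximum point of the periodic function `u₁ - u₂`. There the gradients of `u₁` and
`u₂` agree and `Hess (u₁ - u₂) ≤ 0`, so `A[u₁](x₀) = A[u₂](x₀) + P` with `P` positive
semidefinite. Since `A[u₂](x₀)` is positive definite, `det A[u₂](x₀) ≤ det A[u₁](x₀)`, and as the
gradient factors coincide, the equation turns this into `e^{-λ u₂(x₀)} ≤ e^{-λ u₁(x₀)}`, i.e.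
`u₁ - u₂ ≤ 0` at its maximum. Exchanging the roles of `u₁` and `u₂` gives equality.
-/

open Filter Topology Set

namespace Matrix

variable {n : Type*} [Fintype n] [DecidableEq n]

theorem PosSemidef.one_le_det_one_add {C : Matrix n n ℝ} (hC : C.PosSemidef) :
    1 ≤ (1 + C).det := by
  set U := hC.1.eigenvectorUnitary
  have hconj : 1 + C = (U : Matrix n n ℝ) * diagonal (fun i => 1 + hC.1.eigenvalues i) *
      star (U : Matrix n n ℝ) := by
    conv_lhs => rw [hC.1.spectral_theorem, ← map_one (Unitary.conjStarAlgAut ℝ _ U), ← map_add]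
    simp [← diagonal_one, diagonal_add]
  rw [hconj, det_conj_of_mul_eq_one (Unitary.mul_star_self_of_mem U.2)
    (Unitary.star_mul_self_of_mem U.2), det_diagonal]
  exact Finset.one_le_prod fun i _ => by simpa using hC.eigenvalues_nonneg i

open scoped MatrixOrder in
theorem PosDef.det_le_det_add {A B : Matrix n n ℝ} (hA : A.PosDef) (hB : B.PosSemidef) :
    A.det ≤ (A + B).det := by
  set S := CFC.sqrt A
  have hSS : S * S = A := CFC.sqrt_mul_sqrt_self A hA.posSemidef.nonneg
  have hS : IsUnit S.det := isUnit_iff_ne_zero.mpr fun h => hA.det_pos.ne' <| by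
    rw [← hSS, det_mul, h, zero_mul]
  have hSinv : S⁻¹ᴴ = S⁻¹ := ((CFC.sqrt_nonneg A).posSemidef.1.inv).eq
  have hC : (S⁻¹ * B * S⁻¹).PosSemidef := by
    simpa only [hSinv] using hB.conjTranspose_mul_mul_same S⁻¹
  have hfactor : A + B = S * (1 + S⁻¹ * B * S⁻¹) * S := by
    rw [Matrix.mul_add, Matrix.add_mul, Matrix.mul_one, hSS, ← Matrix.mul_assoc,
      ← Matrix.mul_assoc, mul_nonsing_inv S hS, Matrix.one_mul,
      Matrix.mul_assoc, nonsing_inv_mul S hS, Matrix.mul_one]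
  calc A.det = A.det * 1 := (mul_one _).symm
    _ ≤ A.det * (1 + S⁻¹ * B * S⁻¹).det :=
      mul_le_mul_of_nonneg_left hC.one_le_det_one_add hA.det_pos.le
    _ = (A + B).det := by
      rw [hfactor, det_mul, det_mul, ← hSS, det_mul]; ring

end Matrix

theorem IsLocalMax.deriv_deriv_nonpos {g : ℝ → ℝ} {a : ℝ} (h : IsLocalMax g a)
    (hc : ContinuousAt g a) : deriv (deriv g) a ≤ 0 := by
  by_contra! hpos
  have hmin : IsLocalMin g a := isLocalMin_of_deriv_deriv_pos hpos h.deriv_eq_zero hc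
  have hconst : g =ᶠ[𝓝 a] fun _ => g a := (h.and hmin).mono fun x hx => le_antisymm hx.1 hx.2
  have hderiv : deriv g =ᶠ[𝓝 a] fun _ => 0 :=
    hconst.eventually_nhds.mono fun x hx => by rw [Filter.EventuallyEq.deriv_eq hx, deriv_const]
  simp [hderiv.deriv_eq] at hpos

theorem IsLocalMax.fderiv_fderiv_apply_self_nonpos {E : Type*} [NormedAddCommGroup E]
    [NormedSpace ℝ E] {w : E → ℝ} {x : E} (h : IsLocalMax w x) (hw : Differentiable ℝ w)
    (hw' : DifferentiableAt ℝ (fderiv ℝ w) x) (v : E) :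
    fderiv ℝ (fderiv ℝ w) x v v ≤ 0 := by
  set φ : ℝ → E := fun t => x + t • v
  have hφ0 : φ 0 = x := by simp [φ]
  have hφ : ∀ t, HasDerivAt φ v t := fun t =>
    (((hasDerivAt_id t).smul_const v).const_add x).congr_deriv (one_smul ℝ v)
  have hderiv : deriv (w ∘ φ) = fun t => fderiv ℝ w (φ t) v :=
    funext fun t => ((hw _).hasFDerivAt.comp_hasDerivAt t (hφ t)).deriv
  have hderiv2 : HasDerivAt (fun t => fderiv ℝ w (φ t) v) (fderiv ℝ (fderiv ℝ w) x v v) 0 := by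
    rw [← hφ0] at hw' ⊢
    exact (ContinuousLinearMap.apply ℝ ℝ v).hasFDerivAt.comp_hasDerivAt 0
      (hw'.hasFDerivAt.comp_hasDerivAt 0 (hφ 0))
  rw [← hφ0] at h
  have := (h.comp_continuous (hφ 0).continuousAt).deriv_deriv_nonpos
    (hw.continuous.continuousAt.comp (hφ 0).continuousAt)
  rwa [hderiv, hderiv2.deriv] at this

theorem ContDiff.differentiable_fderiv {𝕜 E F : Type*} [NontriviallyNormedField 𝕜]
    [NormedAddCommGroup E] [NormedSpace 𝕜 E] [NormedAddCommGroup F] [NormedSpace 𝕜 F]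
    {u : E → F} (hu : ContDiff 𝕜 2 u) : Differentiable 𝕜 (fderiv 𝕜 u) :=
  (hu.fderiv_right (m := 1) le_rfl).differentiable one_ne_zero

section Hessian

variable {N : ℕ}

theorem hess_eq_fderiv_fderiv {u : (Fin N → ℝ) → ℝ} {x : Fin N → ℝ}
    (hu : DifferentiableAt ℝ (fderiv ℝ u) x) (i j : Fin N) :
    hess u x i j = fderiv ℝ (fderiv ℝ u) x (Pi.single i 1) (Pi.single j 1) := by
  rw [hess, fderiv_clm_apply hu (differentiableAt_const _)]
  simp

theorem dotProduct_hess_mulVec {u : (Fin N → ℝ) → ℝ} {x : Fin N → ℝ}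
    (hu : DifferentiableAt ℝ (fderiv ℝ u) x) (v : Fin N → ℝ) :
    v ⬝ᵥ of (hess u x) *ᵥ v = fderiv ℝ (fderiv ℝ u) x v v := by
  have : of (hess u x) = LinearMap.toMatrix₂' ℝ (fderiv ℝ (fderiv ℝ u) x).toLinearMap₁₂ := by
    ext i j
    simp [hess_eq_fderiv_fderiv hu]
  rw [this, ← Matrix.toLinearMap₂'_apply', Matrix.toLinearMap₂'_toMatrix']
  rfl

theorem isHermitian_hess {u : (Fin N → ℝ) → ℝ} (hu : ContDiff ℝ 2 u) (x : Fin N → ℝ) :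
    (of (hess u x)).IsHermitian := by
  have hsymm := hu.contDiffAt.isSymmSndFDerivAt (x := x)
    (by simp [minSmoothness_of_isRCLikeNormedField])
  ext i j
  simp [hess_eq_fderiv_fderiv (hu.differentiable_fderiv x), hsymm (Pi.single i 1)]

theorem IsLocalMax.posSemidef_neg_hess {u : (Fin N → ℝ) → ℝ} {x : Fin N → ℝ}
    (h : IsLocalMax u x) (hu : ContDiff ℝ 2 u) : (-of (hess u x)).PosSemidef := by
  have hd := hu.differentiable_fderiv x
  refine posSemidef_iff_dotProduct_mulVec.mpr ⟨(isHermitian_hess hu x).neg, fun v => ?_⟩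
  rw [star_trivial, neg_mulVec, dotProduct_neg, dotProduct_hess_mulVec hd, neg_nonneg]
  exact h.fderiv_fderiv_apply_self_nonpos (hu.differentiable two_ne_zero) hd v

theorem hess_sub {u₁ u₂ : (Fin N → ℝ) → ℝ} (hu₁ : ContDiff ℝ 2 u₁) (hu₂ : ContDiff ℝ 2 u₂)
    (x : Fin N → ℝ) (i j : Fin N) :
    hess (u₁ - u₂) x i j = hess u₁ x i j - hess u₂ x i j := by
  have hfderiv : fderiv ℝ (u₁ - u₂) = fderiv ℝ u₁ - fderiv ℝ u₂ := funext fun y =>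
    fderiv_sub (hu₁.differentiable two_ne_zero y) (hu₂.differentiable two_ne_zero y)
  have hsub : ContDiff ℝ 2 (u₁ - u₂) := hu₁.sub hu₂
  rw [hess_eq_fderiv_fderiv (hsub.differentiable_fderiv x), hfderiv,
    fderiv_sub (hu₁.differentiable_fderiv x) (hu₂.differentiable_fderiv x),
    hess_eq_fderiv_fderiv (hu₁.differentiable_fderiv x),
    hess_eq_fderiv_fderiv (hu₂.differentiable_fderiv x)]
  rfl

theorem grad_sub {u₁ u₂ : (Fin N → ℝ) → ℝ} {x : Fin N → ℝ} (hu₁ : DifferentiableAt ℝ u₁ x)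
    (hu₂ : DifferentiableAt ℝ u₂ x) (i : Fin N) :
    grad (u₁ - u₂) x i = grad u₁ x i - grad u₂ x i := by
  simp [grad, fderiv_sub hu₁ hu₂]

theorem IsLocalMax.grad_eq_zero {u : (Fin N → ℝ) → ℝ} {x : Fin N → ℝ} (h : IsLocalMax u x)
    (i : Fin N) : grad u x i = 0 := by
  simp [grad, h.fderiv_eq_zero]

theorem amat_eq_add_neg_hess_sub {u₁ u₂ : (Fin N → ℝ) → ℝ} (hu₁ : ContDiff ℝ 2 u₁)
    (hu₂ : ContDiff ℝ 2 u₂) {x : Fin N → ℝ} (hgrad : ∀ i, grad u₁ x i = grad u₂ x i) :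
    amat u₁ x = amat u₂ x + -of (hess (u₁ - u₂) x) := by
  ext i j
  simp only [amat, Matrix.add_apply, Matrix.sub_apply, Matrix.neg_apply, of_apply, hgrad,
    hess_sub hu₁ hu₂]
  ring

end Hessian

theorem ZPeriodic.sub {N : ℕ} {u₁ u₂ : (Fin N → ℝ) → ℝ} (h₁ : ZPeriodic u₁)
    (h₂ : ZPeriodic u₂) : ZPeriodic (u₁ - u₂) := fun x k => by
  simp [h₁ x k, h₂ x k]

theorem ZPeriodic.exists_forall_le {N : ℕ} {u : (Fin N → ℝ) → ℝ} (hper : ZPeriodic u)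
    (hc : Continuous u) : ∃ x₀, ∀ x, u x ≤ u x₀ := by
  obtain ⟨x₀, -, hmax⟩ := (isCompact_Icc (a := (0 : Fin N → ℝ)) (b := 1)).exists_isMaxOn
    (nonempty_Icc.2 zero_le_one) hc.continuousOn
  refine ⟨x₀, fun x => ?_⟩
  have hmem : (x + fun i => ((-⌊x i⌋ : ℤ) : ℝ)) ∈ Icc (0 : Fin N → ℝ) 1 :=
    ⟨fun i => by simp [Int.floor_le], fun i => by simp [(Int.lt_floor_add_one (x i)).le, add_comm]⟩
  rw [← hper x]
  exact hmax hmem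

theorem le_of_det_amat_eq {N : ℕ} {lam p : ℝ} (hlam : 0 < lam) {f : (Fin N → ℝ) → ℝ}
    (hfpos : ∀ x, 0 < f x) {u₁ u₂ : (Fin N → ℝ) → ℝ}
    (hu₁ : ContDiff ℝ 2 u₁) (hper₁ : ZPeriodic u₁)
    (hu₂ : ContDiff ℝ 2 u₂) (hper₂ : ZPeriodic u₂) (hadm₂ : Admissible u₂)
    (heq₁ : ∀ x, (amat u₁ x).det = exp (-(lam * u₁ x)) * f x * (1 + gradSq u₁ x) ^ p)
    (heq₂ : ∀ x, (amat u₂ x).det = exp (-(lam * u₂ x)) * f x * (1 + gradSq u₂ x) ^ p)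
    (x : Fin N → ℝ) : u₁ x ≤ u₂ x := by
  obtain ⟨x₀, hmax⟩ := (hper₁.sub hper₂).exists_forall_le (hu₁.sub hu₂).continuous
  have hlocmax : IsLocalMax (u₁ - u₂) x₀ := Eventually.of_forall hmax
  have hgrad : ∀ i, grad u₁ x₀ i = grad u₂ x₀ i := fun i => sub_eq_zero.mp <| by
    rw [← grad_sub (hu₁.differentiable two_ne_zero x₀) (hu₂.differentiable two_ne_zero x₀),
      hlocmax.grad_eq_zero]
  have hdet : (amat u₂ x₀).det ≤ (amat u₁ x₀).det := by
    rw [amat_eq_add_neg_hess_sub hu₁ hu₂ hgrad]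
    exact (hadm₂ x₀).det_le_det_add (hlocmax.posSemidef_neg_hess (hu₁.sub hu₂))
  have hgradSq : gradSq u₁ x₀ = gradSq u₂ x₀ := by simp only [gradSq, hgrad]
  rw [heq₁, heq₂, hgradSq] at hdet
  have hweight : 0 < (1 + gradSq u₂ x₀) ^ p :=
    rpow_pos_of_pos (add_pos_of_pos_of_nonneg one_pos (Finset.sum_nonneg fun i _ => sq_nonneg _)) p
  have hexp := exp_le_exp.mp
    (le_of_mul_le_mul_right (le_of_mul_le_mul_right hdet hweight) (hfpos x₀))
  have hx₀ : u₁ x₀ ≤ u₂ x₀ := le_of_mul_le_mul_left (by linarith) hlam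
  linarith [hmax x, (Pi.sub_apply u₁ u₂ x).symm, Pi.sub_apply u₁ u₂ x₀]

theorem stmt6_general {N : ℕ} (p : ℝ) (lam : ℝ) (hlam : 0 < lam)
    (f : (Fin N → ℝ) → ℝ) (hfpos : ∀ x, 0 < f x)
    (u₁ u₂ : (Fin N → ℝ) → ℝ)
    (hu₁ : ContDiff ℝ 2 u₁) (hper₁ : ZPeriodic u₁) (hadm₁ : Admissible u₁)
    (hu₂ : ContDiff ℝ 2 u₂) (hper₂ : ZPeriodic u₂) (hadm₂ : Admissible u₂)
    (heq₁ : ∀ x, (amat u₁ x).det =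
      Real.exp (-(lam * u₁ x)) * f x * (1 + gradSq u₁ x) ^ p)
    (heq₂ : ∀ x, (amat u₂ x).det =
      Real.exp (-(lam * u₂ x)) * f x * (1 + gradSq u₂ x) ^ p) :
    u₁ = u₂ := by
  exact funext fun x => le_antisymm
    (le_of_det_amat_eq hlam hfpos hu₁ hper₁ hu₂ hper₂ hadm₂ heq₁ heq₂ x)
    (le_of_det_amat_eq hlam hfpos hu₂ hper₂ hu₁ hper₁ hadm₁ heq₂ heq₁ x)

/-- Uniqueness: two admissible periodic solutions of
`det A[u] = e^{−λu} f (1 + ‖∇u‖²)^p` coincide. -/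
theorem stmt6 {N : ℕ} (hN : 1 ≤ N) (p : ℝ) (hp : 0 ≤ p) (lam : ℝ) (hlam : 0 < lam)
    (f : (Fin N → ℝ) → ℝ) (hfcont : Continuous f)
    (hfper : ∀ (x : Fin N → ℝ) (k : Fin N → ℤ), f (x + fun i => (k i : ℝ)) = f x)
    (hfpos : ∀ x, 0 < f x)
    (u₁ u₂ : (Fin N → ℝ) → ℝ)
    (hu₁ : ContDiff ℝ 2 u₁) (hper₁ : ZPeriodic u₁) (hadm₁ : Admissible u₁)
    (hu₂ : ContDiff ℝ 2 u₂) (hper₂ : ZPeriodic u₂) (hadm₂ : Admissible u₂)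
    (heq₁ : ∀ x, (amat u₁ x).det =
      Real.exp (-(lam * u₁ x)) * f x * (1 + gradSq u₁ x) ^ p)
    (heq₂ : ∀ x, (amat u₂ x).det =
      Real.exp (-(lam * u₂ x)) * f x * (1 + gradSq u₂ x) ^ p) :
    u₁ = u₂ :=
  stmt6_general p lam hlam f hfpos u₁ u₂ hu₁ hper₁ hadm₁ hu₂ hper₂ hadm₂ heq₁ heq₂
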